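/- Potential-based reward shaping preserves Nash equilibria: in a finite-horizon Markov game, if each agent i's reward is modified from R_i(s_t, u_t) to R_i(s_t, u_t) + γΘ(s_{t+1}) - Θ(s_t) for a state-only potential Θ, then for every joint policy the modified discounted value of each agent differs from the original by a constant (depending only on the initial state), hence the set of Nash equilibria is unchanged. -/

import Mathlib

/-!
Along any trajectory the shaping terms `γ^(t+1) Θ(s_{t+1}) - γ^t Θ(s_t)` telescope, and since `Θ` is
bounded and `γ < 1` the discounted potentials tend to zero, so the shaped value is the original one
minus `Θ(s_0)`. A shift by a constant independent of the policies cannot change which unilateral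
deviations are profitable.
-/

/-- Deterministic state trajectory induced by per-agent Markov policies
`π i : S → U i` with transition function `f`. -/
def traj {S : Type*} {ι : Type*} {U : ι → Type*}
    (f : S → (∀ i, U i) → S) (π : ∀ i, S → U i) (s0 : S) : ℕ → S
  | 0 => s0
  | t + 1 => f (traj f π s0 t) (fun i => π i (traj f π s0 t))

/-- Infinite-horizon discounted value of agent `i` under joint policy `π`,
for reward function `R i`. -/
noncomputable def value {S : Type*} {ι : Type*} {U : ι → Type*}
    (γ : ℝ) (f : S → (∀ i, U i) → S) (R : ι → S → (∀ i, U i) → ℝ)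
    (i : ι) (π : ∀ i, S → U i) (s0 : S) : ℝ :=
  ∑' t : ℕ, γ ^ t * R i (traj f π s0 t) (fun j => π j (traj f π s0 t))

theorem summable_pow_mul_of_abs_le {γ : ℝ} (hγ : |γ| < 1) {h : ℕ → ℝ} {M : ℝ}
    (hM : ∀ t, |h t| ≤ M) : Summable fun t => γ ^ t * h t :=
  ((summable_geometric_of_lt_one (abs_nonneg γ) hγ).mul_right M).of_norm_bounded fun t => by
    rw [Real.norm_eq_abs, abs_mul, abs_pow]
    exact mul_le_mul_of_nonneg_left (hM t) (pow_nonneg (abs_nonneg γ) t)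

theorem tsum_add_sub_succ {G : Type*} [AddCommGroup G] [TopologicalSpace G]
    [IsTopologicalAddGroup G] [T2Space G] {a g : ℕ → G} (ha : Summable a) (hg : Summable g) :
    ∑' t, (a t + (g (t + 1) - g t)) = ∑' t, a t - g 0 := by
  have hg1 : Summable fun t => g (t + 1) := (summable_nat_add_iff 1).2 hg
  rw [ha.tsum_add (hg1.sub hg), hg1.tsum_sub hg, hg.tsum_eq_zero_add]
  abel

section MarkovGame

variable {S ι : Type*} {U : ι → Type*}

theorem traj_succ (f : S → (∀ i, U i) → S) (π : ∀ i, S → U i) (s0 : S) (t : ℕ) :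
    traj f π s0 (t + 1) = f (traj f π s0 t) (fun i => π i (traj f π s0 t)) :=
  rfl

def shapedReward (γ : ℝ) (f : S → (∀ i, U i) → S) (R : ι → S → (∀ i, U i) → ℝ) (Θ : S → ℝ) :
    ι → S → (∀ i, U i) → ℝ :=
  fun i s u => R i s u + γ * Θ (f s u) - Θ s

theorem value_shapedReward {γ : ℝ} (hγ : |γ| < 1) (f : S → (∀ i, U i) → S)
    {R : ι → S → (∀ i, U i) → ℝ} {MR : ℝ} (hR : ∀ i s u, |R i s u| ≤ MR)
    {Θ : S → ℝ} {MΘ : ℝ} (hΘ : ∀ s, |Θ s| ≤ MΘ) (i : ι) (π : ∀ i, S → U i) (s0 : S) :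
    value γ f (shapedReward γ f R Θ) i π s0 = value γ f R i π s0 - Θ s0 := by
  set x := traj f π s0
  have hstep : ∀ t, γ ^ t * shapedReward γ f R Θ i (x t) (fun j => π j (x t)) =
      γ ^ t * R i (x t) (fun j => π j (x t)) + (γ ^ (t + 1) * Θ (x (t + 1)) - γ ^ t * Θ (x t)) := by
    intro t
    rw [show x (t + 1) = _ from traj_succ f π s0 t, shapedReward]
    ring
  rw [value, value, tsum_congr hstep,
    tsum_add_sub_succ (summable_pow_mul_of_abs_le hγ fun t => hR i _ _)
      (summable_pow_mul_of_abs_le hγ fun t => hΘ _)]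
  simp [x, traj]

end MarkovGame

def IsNashEquilibrium {ι : Type*} [DecidableEq ι] {P : ι → Type*} (V : ι → (∀ i, P i) → ℝ)
    (π : ∀ i, P i) : Prop :=
  ∀ i (σ : P i), V i (Function.update π i σ) ≤ V i π

theorem isNashEquilibrium_iff_of_eq_sub {ι : Type*} [DecidableEq ι] {P : ι → Type*}
    {V V' : ι → (∀ i, P i) → ℝ} {c : ι → ℝ} (h : ∀ i π, V' i π = V i π - c i) (π : ∀ i, P i) :
    IsNashEquilibrium V' π ↔ IsNashEquilibrium V π := by
  simp only [IsNashEquilibrium, h, sub_le_sub_iff_right]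

theorem stmt_9_general {S : Type*} {ι : Type*} [DecidableEq ι] {U : ι → Type*}
    (γ : ℝ) (hγ0 : 0 < γ) (hγ1 : γ < 1)
    (f : S → (∀ i, U i) → S) (R : ι → S → (∀ i, U i) → ℝ)
    (MR MΘ : ℝ) (hR : ∀ i s u, |R i s u| ≤ MR)
    (Θ : S → ℝ) (hΘ : ∀ s, |Θ s| ≤ MΘ) :
    -- the shaped rewards `R i s u + γ * Θ (f s u) - Θ s` change every value
    -- function by the constant `Θ s0` depending only on the initial state ...
    (∀ (i : ι) (π : ∀ i, S → U i) (s0 : S),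
      value γ f (fun i s u => R i s u + γ * Θ (f s u) - Θ s) i π s0 =
        value γ f R i π s0 - Θ s0) ∧
    -- ... hence the Nash equilibria are unchanged
    (∀ (π : ∀ i, S → U i) (s0 : S),
      ((∀ (i : ι) (σ : S → U i),
          value γ f R i (Function.update π i σ) s0 ≤ value γ f R i π s0) ↔
       (∀ (i : ι) (σ : S → U i),
          value γ f (fun i s u => R i s u + γ * Θ (f s u) - Θ s) i
              (Function.update π i σ) s0 ≤
            value γ f (fun i s u => R i s u + γ * Θ (f s u) - Θ s) i π s0))) := by
  have hγ : |γ| < 1 := abs_lt.2 ⟨by linarith, hγ1⟩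
  have hshift := value_shapedReward hγ f hR hΘ
  refine ⟨hshift, fun π s0 => ?_⟩
  exact (isNashEquilibrium_iff_of_eq_sub (V := fun i π => value γ f R i π s0)
    (fun i π => hshift i π s0) π).symm

theorem stmt_9 {S : Type*} {ι : Type*} [Fintype ι] [DecidableEq ι] {U : ι → Type*}
    (γ : ℝ) (hγ0 : 0 < γ) (hγ1 : γ < 1)
    (f : S → (∀ i, U i) → S) (R : ι → S → (∀ i, U i) → ℝ)
    (MR MΘ : ℝ) (hR : ∀ i s u, |R i s u| ≤ MR)
    (Θ : S → ℝ) (hΘ : ∀ s, |Θ s| ≤ MΘ) :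
    -- the shaped rewards `R i s u + γ * Θ (f s u) - Θ s` change every value
    -- function by the constant `Θ s0` depending only on the initial state ...
    (∀ (i : ι) (π : ∀ i, S → U i) (s0 : S),
      value γ f (fun i s u => R i s u + γ * Θ (f s u) - Θ s) i π s0 =
        value γ f R i π s0 - Θ s0) ∧
    -- ... hence the Nash equilibria are unchanged
    (∀ (π : ∀ i, S → U i) (s0 : S),
      ((∀ (i : ι) (σ : S → U i),
          value γ f R i (Function.update π i σ) s0 ≤ value γ f R i π s0) ↔
       (∀ (i : ι) (σ : S → U i),
          value γ f (fun i s u => R i s u + γ * Θ (f s u) - Θ s) i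
              (Function.update π i σ) s0 ≤
            value γ f (fun i s u => R i s u + γ * Θ (f s u) - Θ s) i π s0))) :=
  stmt_9_general γ hγ0 hγ1 f R MR MΘ hR Θ hΘ
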